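/- Let λ > 0, n ≥ 0, and 0 < α_j ≤ 1 for 0 ≤ j ≤ n, and suppose α_n − α_0 > 0. Let p(n,t) = (−1)^n ∑_{k=n}^∞ (−λ)^k ∑_{Θ^k_n} t^{∑ k_j α_j} / Γ(1 + ∑ k_j α_j) (the SDTFPP-I series with orders α_j) and let q(n,t) = (−1)^n ∑_{k=n}^∞ (−λ)^k ∑_{Ω^k_n} t^{∑ k_j α_j} / Γ(1 + ∑ k_j α_j) (the SDTFPP-II series with the same orders β_j = α_j). Then for every t ≥ 0, p(n,t) = (I^{α_n − α_0}_t q(n,·))(t). -/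

import Mathlib

open scoped BigOperators

/-- Riemann–Liouville fractional integral of order `α`. -/
noncomputable def rlInt (α : ℝ) (f : ℝ → ℝ) (t : ℝ) : ℝ :=
  (1 / Real.Gamma α) * ∫ s in (0:ℝ)..t, (t - s) ^ (α - 1) * f s

/-- `Theta n k` is the set of tuples `(k_0, …, k_n)` of nonnegative integers with
`k_0 + ⋯ + k_n = k` and `k_j ≥ 1` for `1 ≤ j ≤ n`. -/
def Theta (n k : ℕ) : Finset (Fin (n + 1) → ℕ) :=
  (Finset.Nat.antidiagonalTuple (n + 1) k).filter
    (fun κ => ∀ j : Fin (n + 1), 1 ≤ j.val → 1 ≤ κ j)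

/-- The state probabilities of SDTFPP-I (note that `Theta n k = ∅` for `k < n`,
so the series over all `k : ℕ` agrees with the series starting at `k = n`). -/
noncomputable def pI (lam : ℝ) (α : ℕ → ℝ) (n : ℕ) (t : ℝ) : ℝ :=
  (-1 : ℝ) ^ n * ∑' k : ℕ, (-lam) ^ k *
    ∑ κ ∈ Theta n k,
      t ^ (∑ j, (κ j : ℝ) * α j.val) / Real.Gamma (1 + ∑ j, (κ j : ℝ) * α j.val)
/-- `Omega n k` is the set of tuples `(k_0, …, k_n)` of nonnegative integers with
`k_0 + ⋯ + k_n = k` and `k_j ≥ 1` for `0 ≤ j ≤ n - 1` (`k_n` may be `0`). -/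
def Omega (n k : ℕ) : Finset (Fin (n + 1) → ℕ) :=
  (Finset.Nat.antidiagonalTuple (n + 1) k).filter
    (fun κ => ∀ j : Fin (n + 1), j.val < n → 1 ≤ κ j)

/-- The state probabilities of SDTFPP-II (note that `Omega n k = ∅` for `k < n`,
so the series over all `k : ℕ` agrees with the series starting at `k = n`). -/
noncomputable def qII (lam : ℝ) (β : ℕ → ℝ) (n : ℕ) (t : ℝ) : ℝ :=
  (-1 : ℝ) ^ n * ∑' k : ℕ, (-lam) ^ k *
    ∑ κ ∈ Omega n k,
      t ^ (∑ j, (κ j : ℝ) * β j.val) / Real.Gamma (1 + ∑ j, (κ j : ℝ) * β j.val)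

/-!
Fractional integration shifts the exponent of a normalized power:
`I^δ (s ^ x / Γ(1 + x)) = t ^ (x + δ) / Γ(1 + x + δ)`, which is a Beta integral. Moving one unit
from `k_n` to `k_0` is a bijection `Θ^k_n → Ω^k_n` that lowers `∑ k_j α_j` by `α_n - α_0`, so the
series of `p(n, ·)` is the series of `q(n, ·)` with every exponent raised by `α_n - α_0`.
Integrating the series of `q(n, ·)` term by term is legitimate because `Γ(1 + x)` outgrows every
exponential in `x`, while only exponentially many tuples have total `k`.
-/

open Real MeasureTheory Filter Topology Finset
open scoped Nat

section MoveUnit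

variable {ι : Type*} [DecidableEq ι]

def moveUnit (a b : ι) (κ : ι → ℕ) : ι → ℕ := κ + Pi.single a 1 - Pi.single b 1

variable {a b : ι} {κ : ι → ℕ}

lemma moveUnit_apply_left (hab : a ≠ b) : moveUnit a b κ a = κ a + 1 := by
  simp [moveUnit, hab]

lemma moveUnit_apply_right (hab : a ≠ b) : moveUnit a b κ b = κ b - 1 := by
  simp [moveUnit, hab.symm]

lemma moveUnit_apply_of_ne {i : ι} (hia : i ≠ a) (hib : i ≠ b) : moveUnit a b κ i = κ i := by
  simp [moveUnit, hia, hib]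

lemma moveUnit_moveUnit (hab : a ≠ b) (hb : 1 ≤ κ b) : moveUnit b a (moveUnit a b κ) = κ := by
  funext i
  by_cases hia : i = a
  · subst hia; rw [moveUnit_apply_right hab.symm, moveUnit_apply_left hab]; omega
  by_cases hib : i = b
  · subst hib; rw [moveUnit_apply_left hab.symm, moveUnit_apply_right hab]; omega
  rw [moveUnit_apply_of_ne hib hia, moveUnit_apply_of_ne hia hib]

lemma sum_moveUnit_mul [Fintype ι] {R : Type*} [CommRing R] (hab : a ≠ b) (hb : 1 ≤ κ b)
    (w : ι → R) : ∑ i, (moveUnit a b κ i : R) * w i = ∑ i, (κ i : R) * w i + w a - w b := by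
  have hcast : ∀ i, (moveUnit a b κ i : R) =
      κ i + (Pi.single a 1 : ι → R) i - (Pi.single b 1 : ι → R) i := by
    intro i
    by_cases hia : i = a
    · subst hia; simp [moveUnit_apply_left hab, hab]
    by_cases hib : i = b
    · subst hib; simp [moveUnit_apply_right hab, Nat.cast_sub hb, hia]
    simp [moveUnit_apply_of_ne hia hib, hia, hib]
  simp only [hcast, add_mul, sub_mul, sum_add_distrib, sum_sub_distrib, Pi.single_apply,
    ite_mul, one_mul, zero_mul, sum_ite_eq', mem_univ, if_true]

lemma sum_moveUnit [Fintype ι] (hab : a ≠ b) (hb : 1 ≤ κ b) :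
    ∑ i, moveUnit a b κ i = ∑ i, κ i := by
  have := sum_moveUnit_mul (R := ℤ) hab hb 1
  simp only [Pi.one_apply, mul_one, add_sub_cancel_right] at this
  exact_mod_cast this

end MoveUnit

lemma mem_Theta {n k : ℕ} {κ : Fin (n + 1) → ℕ} :
    κ ∈ Theta n k ↔ ∑ j, κ j = k ∧ ∀ j : Fin (n + 1), 1 ≤ j.val → 1 ≤ κ j := by
  rw [Theta, mem_filter, Finset.Nat.mem_antidiagonalTuple]

lemma mem_Omega {n k : ℕ} {κ : Fin (n + 1) → ℕ} :
    κ ∈ Omega n k ↔ ∑ j, κ j = k ∧ ∀ j : Fin (n + 1), j.val < n → 1 ≤ κ j := by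
  rw [Omega, mem_filter, Finset.Nat.mem_antidiagonalTuple]

lemma moveUnit_mem_Omega {n k : ℕ} (hn : n ≠ 0) {κ : Fin (n + 1) → ℕ} (hκ : κ ∈ Theta n k) :
    moveUnit 0 (Fin.last n) κ ∈ Omega n k := by
  have h0L : (0 : Fin (n + 1)) ≠ Fin.last n := by simpa [Fin.ext_iff] using hn.symm
  obtain ⟨hsum, hpos⟩ := mem_Theta.mp hκ
  have hL := hpos (Fin.last n) (by simp; omega)
  refine mem_Omega.mpr ⟨(sum_moveUnit h0L hL).trans hsum, fun j hj => ?_⟩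
  by_cases hj0 : j = 0
  · subst hj0; rw [moveUnit_apply_left h0L]; omega
  · have hjL : j ≠ Fin.last n := by simp [Fin.ext_iff]; omega
    rw [moveUnit_apply_of_ne hj0 hjL]
    exact hpos j (Nat.one_le_iff_ne_zero.mpr fun h => hj0 (Fin.ext h))

lemma moveUnit_mem_Theta {n k : ℕ} (hn : n ≠ 0) {κ : Fin (n + 1) → ℕ} (hκ : κ ∈ Omega n k) :
    moveUnit (Fin.last n) 0 κ ∈ Theta n k := by
  have hL0 : Fin.last n ≠ 0 := by simpa [Fin.ext_iff] using hn
  obtain ⟨hsum, hpos⟩ := mem_Omega.mp hκ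
  have h0 := hpos 0 (by simp; omega)
  refine mem_Theta.mpr ⟨(sum_moveUnit hL0 h0).trans hsum, fun j hj => ?_⟩
  by_cases hjL : j = Fin.last n
  · subst hjL; rw [moveUnit_apply_left hL0]; omega
  · have hj0 : j ≠ 0 := by rintro rfl; simp at hj
    rw [moveUnit_apply_of_ne hjL hj0]
    exact hpos j (Fin.val_lt_last hjL)

lemma sum_Theta_eq_sum_Omega {M : Type*} [AddCommMonoid M] {n : ℕ} (hn : n ≠ 0) (k : ℕ)
    (α : ℕ → ℝ) (f : ℝ → M) :
    ∑ κ ∈ Theta n k, f (∑ j, (κ j : ℝ) * α j.val) =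
      ∑ κ ∈ Omega n k, f (∑ j, (κ j : ℝ) * α j.val + (α n - α 0)) := by
  have h0L : (0 : Fin (n + 1)) ≠ Fin.last n := by simpa [Fin.ext_iff] using hn.symm
  refine sum_nbij' (moveUnit 0 (Fin.last n)) (moveUnit (Fin.last n) 0)
    (fun κ hκ => moveUnit_mem_Omega hn hκ) (fun κ hκ => moveUnit_mem_Theta hn hκ)
    (fun κ hκ => moveUnit_moveUnit h0L ((mem_Theta.mp hκ).2 _ (by simp; omega)))
    (fun κ hκ => moveUnit_moveUnit h0L.symm ((mem_Omega.mp hκ).2 _ (by simp; omega)))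
    (fun κ hκ => ?_)
  rw [sum_moveUnit_mul h0L ((mem_Theta.mp hκ).2 _ (by simp; omega))]
  simp only [Fin.val_zero, Fin.val_last]
  ring_nf

noncomputable def powDivGamma (x t : ℝ) : ℝ := t ^ x / Gamma (1 + x)

lemma powDivGamma_nonneg {x t : ℝ} (hx : -1 < x) (ht : 0 ≤ t) : 0 ≤ powDivGamma x t :=
  div_nonneg (rpow_nonneg ht x) (Gamma_pos_of_pos (by linarith)).le

lemma factorial_floor_le_two_mul_Gamma {x : ℝ} (hx : 0 ≤ x) :
    (⌊x⌋₊ ! : ℝ) ≤ 2 * Gamma (1 + x) := by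
  set m := ⌊x⌋₊
  have hxm : x < m + 1 := Nat.lt_floor_add_one x
  have hrec : Gamma (2 + x) = (1 + x) * Gamma (1 + x) := by
    rw [← Gamma_add_one (by linarith)]; ring_nf
  have hmono : ((m + 1) ! : ℝ) ≤ Gamma (2 + x) := by
    rw [← Gamma_nat_eq_factorial]
    push_cast
    refine Gamma_strictMonoOn_Ici.monotoneOn (Set.mem_Ici.mpr ?_) (Set.mem_Ici.mpr ?_) ?_
    · linarith [(m.cast_nonneg : (0 : ℝ) ≤ m)]
    · linarith
    · linarith [Nat.floor_le hx]
  have hfac : ((m + 1) ! : ℝ) = (m + 1) * m ! := by push_cast [Nat.factorial_succ]; ring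
  have hpos : (0 : ℝ) < 1 + x := by linarith
  have key : (1 + x) * m ! ≤ (1 + x) * (2 * Gamma (1 + x)) := by
    nlinarith [(Nat.cast_pos.mpr m.factorial_pos : (0 : ℝ) < m !)]
  exact le_of_mul_le_mul_left key hpos

lemma rpow_le_mul_Gamma {x y : ℝ} (hx : 0 ≤ x) (hy : 1 ≤ y) :
    y ^ x ≤ 2 * y * exp y * Gamma (1 + x) := by
  set m := ⌊x⌋₊
  calc y ^ x ≤ y ^ ((m : ℝ) + 1) :=
        rpow_le_rpow_of_exponent_le hy (Nat.lt_floor_add_one x).le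
    _ = y * y ^ m := by rw [rpow_add (by linarith), rpow_one, rpow_natCast, mul_comm]
    _ ≤ y * (exp y * m !) := by
        gcongr
        exact (div_le_iff₀ (by positivity)).mp (pow_div_factorial_le_exp y (by linarith) m)
    _ ≤ y * (exp y * (2 * Gamma (1 + x))) := by
        gcongr; exact factorial_floor_le_two_mul_Gamma hx
    _ = 2 * y * exp y * Gamma (1 + x) := by ring

lemma powDivGamma_le {x z t y : ℝ} (hz : 0 ≤ z) (hzx : z ≤ x) (ht : 0 ≤ t) (hty : t ≤ y)
    (hy : 1 ≤ y) : powDivGamma x t ≤ 2 * y * exp y * (t / y) ^ z := by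
  have hy0 : 0 < y := by linarith
  have hΓ : 0 < Gamma (1 + x) := Gamma_pos_of_pos (by linarith)
  have hty' : (t / y) ^ x ≤ (t / y) ^ z :=
    rpow_le_rpow_of_exponent_ge' (div_nonneg ht hy0.le) ((div_le_one hy0).mpr hty) hz hzx
  rw [powDivGamma, div_le_iff₀ hΓ]
  calc t ^ x = y ^ x * (t / y) ^ x := by
        rw [div_rpow ht hy0.le, mul_div_cancel₀ _ (rpow_pos_of_pos hy0 x).ne']
    _ ≤ 2 * y * exp y * Gamma (1 + x) * (t / y) ^ z := by
        gcongr
        exact rpow_le_mul_Gamma (hz.trans hzx) hy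
    _ = _ := by ring

lemma card_le_of_forall_sum_eq {ι : Type*} [Fintype ι] [DecidableEq ι] {S : Finset (ι → ℕ)}
    {k : ℕ} (hS : ∀ κ ∈ S, ∑ i, κ i = k) : (S.card : ℝ) ≤ (2 ^ Fintype.card ι) ^ k := by
  have hsub : S ⊆ Fintype.piFinset fun _ => range (k + 1) := fun κ hκ =>
    Fintype.mem_piFinset.mpr fun i => mem_range.mpr <| Nat.lt_succ_of_le <|
      hS κ hκ ▸ single_le_sum (fun j _ => Nat.zero_le (κ j)) (mem_univ i)
  have hcard := (card_le_card hsub).trans_eq (by simp : _ = (k + 1) ^ Fintype.card ι)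
  calc (S.card : ℝ) ≤ ((k + 1) ^ Fintype.card ι : ℕ) := by exact_mod_cast hcard
    _ ≤ ((2 ^ k) ^ Fintype.card ι : ℕ) := by gcongr; exact Nat.lt_two_pow_self
    _ = (2 ^ Fintype.card ι) ^ k := by push_cast; ring

lemma summable_pow_mul_sum_powDivGamma {ι : Type*} [Fintype ι] {w : ι → ℝ} {a : ℝ}
    (ha : 0 < a) (hw : ∀ i, a ≤ w i) (r : ℝ) {t c : ℝ} (ht : 0 ≤ t) (hc : 0 ≤ c)
    {S : ℕ → Finset (ι → ℕ)} (hS : ∀ k, ∀ κ ∈ S k, ∑ i, κ i = k) :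
    Summable fun k => r ^ k * ∑ κ ∈ S k, powDivGamma (∑ i, (κ i : ℝ) * w i + c) t := by
  classical
  set N := Fintype.card ι
  -- Choosing `y` with `2 ^ N * |r| * (t / y) ^ a < 1 / 2` makes `powDivGamma_le` and the count
  -- of tuples dominate the `k`-th term by a multiple of `2⁻ᵏ`.
  have hlim : Tendsto (fun y => 2 ^ N * |r| * (t / y) ^ a) atTop (𝓝 0) := by
    have h := ((tendsto_const_nhds (x := t)).div_atTop tendsto_id).rpow_const (Or.inr ha.le)
    simpa [zero_rpow ha.ne'] using h.const_mul (2 ^ N * |r|)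
  obtain ⟨y, ⟨hy1, hty⟩, hρ⟩ := (((eventually_ge_atTop 1).and (eventually_ge_atTop t)).and
    (hlim.eventually (gt_mem_nhds one_half_pos))).exists
  set K := 2 * y * exp y
  have hterm : ∀ k, ∀ κ ∈ S k,
      powDivGamma (∑ i, (κ i : ℝ) * w i + c) t ≤ K * ((t / y) ^ a) ^ k := by
    intro k κ hκ
    have hak : a * k ≤ ∑ i, (κ i : ℝ) * w i + c := by
      have hk : (k : ℝ) = ∑ i, (κ i : ℝ) := by exact_mod_cast (hS k κ hκ).symm
      calc a * k = ∑ i, (κ i : ℝ) * a := by rw [hk, mul_sum]; simp only [mul_comm]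
        _ ≤ ∑ i, (κ i : ℝ) * w i := sum_le_sum fun i _ => by gcongr; exact hw i
        _ ≤ _ := le_add_of_nonneg_right hc
    calc _ ≤ K * (t / y) ^ (a * k) := powDivGamma_le (by positivity) hak ht hty hy1
      _ = K * ((t / y) ^ a) ^ k := by rw [rpow_mul (div_nonneg ht (by linarith)), rpow_natCast]
  refine Summable.of_norm_bounded (summable_geometric_two.mul_left K) fun k => ?_
  have hρ0 : 0 ≤ (t / y) ^ a := rpow_nonneg (div_nonneg ht (by linarith)) a
  have hsum_nonneg : 0 ≤ ∑ κ ∈ S k, powDivGamma (∑ i, (κ i : ℝ) * w i + c) t :=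
    sum_nonneg fun κ _ => powDivGamma_nonneg
      (by linarith [sum_nonneg fun i (_ : i ∈ univ) =>
        mul_nonneg (Nat.cast_nonneg (κ i)) (ha.le.trans (hw i))]) ht
  calc ‖r ^ k * ∑ κ ∈ S k, powDivGamma (∑ i, (κ i : ℝ) * w i + c) t‖
      = |r| ^ k * ∑ κ ∈ S k, powDivGamma (∑ i, (κ i : ℝ) * w i + c) t := by
        rw [norm_mul, norm_pow, Real.norm_eq_abs, Real.norm_of_nonneg hsum_nonneg]
    _ ≤ |r| ^ k * ((S k).card * (K * ((t / y) ^ a) ^ k)) := by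
        gcongr; exact sum_le_card_nsmul _ _ _ (hterm k) |>.trans_eq (nsmul_eq_mul _ _)
    _ ≤ |r| ^ k * ((2 ^ N) ^ k * (K * ((t / y) ^ a) ^ k)) := by
        gcongr; exact card_le_of_forall_sum_eq (hS k)
    _ = K * (2 ^ N * |r| * (t / y) ^ a) ^ k := by ring
    _ ≤ K * (1 / 2) ^ k := by gcongr

lemma integral_rpow_sub_mul_rpow {δ x t : ℝ} (hδ : 0 < δ) (hx : -1 < x) (ht : 0 < t) :
    ∫ s in (0 : ℝ)..t, (t - s) ^ (δ - 1) * s ^ x =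
      Gamma (x + 1) * Gamma δ / Gamma (x + 1 + δ) * t ^ (x + δ) := by
  have hβ := Complex.betaIntegral_scaled (x + 1 : ℝ) δ ht
  rw [Complex.betaIntegral_eq_Gamma_mul_div _ _ (by simp; linarith) (by simpa using hδ)] at hβ
  apply Complex.ofReal_injective
  rw [← intervalIntegral.integral_ofReal]
  have hcongr : ∀ s ∈ Set.uIcc 0 t, (((t - s) ^ (δ - 1) * s ^ x : ℝ) : ℂ) =
      (s : ℂ) ^ (((x + 1 : ℝ) : ℂ) - 1) * ((t : ℂ) - s) ^ ((δ : ℂ) - 1) := by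
    intro s hs
    rw [Set.uIcc_of_le ht.le] at hs
    rw [Complex.ofReal_mul, Complex.ofReal_cpow (sub_nonneg.mpr hs.2),
      Complex.ofReal_cpow hs.1]
    push_cast; ring_nf
  rw [intervalIntegral.integral_congr hcongr, hβ, ← Complex.ofReal_add,
    show ((x + 1 + δ : ℝ) : ℂ) - 1 = ((x + δ : ℝ) : ℂ) by push_cast; ring,
    ← Complex.ofReal_cpow ht.le]
  simp only [Complex.Gamma_ofReal, Complex.ofReal_mul, Complex.ofReal_div]
  ring

lemma integral_rpow_sub_mul_powDivGamma {δ x t : ℝ} (hδ : 0 < δ) (hx : 0 ≤ x) (ht : 0 ≤ t) :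
    ∫ s in (0 : ℝ)..t, (t - s) ^ (δ - 1) * powDivGamma x s = Gamma δ * powDivGamma (x + δ) t := by
  rcases ht.eq_or_lt with rfl | ht
  · rw [intervalIntegral.integral_same, powDivGamma, zero_rpow (by linarith), zero_div, mul_zero]
  have hΓ : Gamma (x + 1) ≠ 0 := (Gamma_pos_of_pos (by linarith)).ne'
  simp_rw [powDivGamma, mul_div_assoc']
  rw [intervalIntegral.integral_div, integral_rpow_sub_mul_rpow hδ (by linarith) ht,
    add_comm 1 x, show 1 + (x + δ) = x + 1 + δ by ring]
  field_simp

lemma intervalIntegrable_rpow_sub_mul_rpow {δ x : ℝ} (hδ : 0 < δ) (hx : 0 ≤ x) (t : ℝ) :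
    IntervalIntegrable (fun s => (t - s) ^ (δ - 1) * s ^ x) volume 0 t := by
  have h := (intervalIntegral.intervalIntegrable_rpow' (r := δ - 1) (a := t - 0) (b := t - t)
    (by linarith)).comp_sub_left t
  rw [sub_sub_cancel, sub_sub_cancel] at h
  exact h.mul_continuousOn (continuous_rpow_const hx).continuousOn

lemma intervalIntegrable_rpow_sub_mul_powDivGamma {δ x : ℝ} (hδ : 0 < δ) (hx : 0 ≤ x) (t : ℝ) :
    IntervalIntegrable (fun s => (t - s) ^ (δ - 1) * powDivGamma x s) volume 0 t := by
  simp_rw [powDivGamma, mul_div_assoc']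
  exact (intervalIntegrable_rpow_sub_mul_rpow hδ hx t).div_const _

lemma intervalIntegrable_rpow_sub_mul_sum_powDivGamma {ι : Type*} {δ : ℝ} (hδ : 0 < δ)
    {e : ι → ℝ} (he : ∀ i, 0 ≤ e i) (S : Finset ι) (t : ℝ) :
    IntervalIntegrable (fun s => (t - s) ^ (δ - 1) * ∑ i ∈ S, powDivGamma (e i) s) volume 0 t := by
  simpa only [sum_fn, mul_sum] using
    IntervalIntegrable.sum S fun i _ => intervalIntegrable_rpow_sub_mul_powDivGamma hδ (he i) t

lemma integral_rpow_sub_mul_sum_powDivGamma {ι : Type*} {δ t : ℝ} (hδ : 0 < δ) (ht : 0 ≤ t)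
    {e : ι → ℝ} (he : ∀ i, 0 ≤ e i) (S : Finset ι) :
    ∫ s in (0 : ℝ)..t, (t - s) ^ (δ - 1) * ∑ i ∈ S, powDivGamma (e i) s =
      Gamma δ * ∑ i ∈ S, powDivGamma (e i + δ) t := by
  simp_rw [mul_sum]
  rw [intervalIntegral.integral_finsetSum fun i _ =>
    intervalIntegrable_rpow_sub_mul_powDivGamma hδ (he i) t]
  simp_rw [integral_rpow_sub_mul_powDivGamma hδ (he _) ht]

theorem rlInt_tsum_mul_sum_powDivGamma {ι : Type*} {δ t : ℝ} (hδ : 0 < δ) (ht : 0 ≤ t)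
    (c : ℕ → ℝ) (S : ℕ → Finset ι) {e : ι → ℝ} (he : ∀ i, 0 ≤ e i)
    (hsum : Summable fun k => |c k| * ∑ i ∈ S k, powDivGamma (e i + δ) t) :
    rlInt δ (fun s => ∑' k, c k * ∑ i ∈ S k, powDivGamma (e i) s) t =
      ∑' k, c k * ∑ i ∈ S k, powDivGamma (e i + δ) t := by
  set F : ℕ → ℝ → ℝ := fun k s => (t - s) ^ (δ - 1) * (c k * ∑ i ∈ S k, powDivGamma (e i) s)
  have hF_int : ∀ k, Integrable (F k) (volume.restrict (Set.Ioc 0 t)) := fun k => by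
    rw [← IntegrableOn, ← intervalIntegrable_iff_integrableOn_Ioc_of_le ht]
    simpa only [F, mul_left_comm _ (c k)] using
      (intervalIntegrable_rpow_sub_mul_sum_powDivGamma hδ he (S k) t).const_mul (c k)
  have hF_integral : ∀ (b : ℝ) (k : ℕ), ∫ s in Set.Ioc 0 t,
      (t - s) ^ (δ - 1) * (b * ∑ i ∈ S k, powDivGamma (e i) s) =
        Gamma δ * (b * ∑ i ∈ S k, powDivGamma (e i + δ) t) := by
    intro b k
    simp_rw [← intervalIntegral.integral_of_le ht, mul_left_comm _ b,
      intervalIntegral.integral_const_mul, integral_rpow_sub_mul_sum_powDivGamma hδ ht he]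
  have hF_norm : ∀ k, ∫ s in Set.Ioc 0 t, ‖F k s‖ =
      Gamma δ * (|c k| * ∑ i ∈ S k, powDivGamma (e i + δ) t) := by
    intro k
    rw [← hF_integral]
    refine setIntegral_congr_fun measurableSet_Ioc fun s hs => ?_
    have hsum_nonneg : 0 ≤ ∑ i ∈ S k, powDivGamma (e i) s :=
      sum_nonneg fun i _ => powDivGamma_nonneg (by linarith [he i]) hs.1.le
    simp only [F, norm_mul, Real.norm_eq_abs, abs_of_nonneg hsum_nonneg,
      abs_of_nonneg (rpow_nonneg (sub_nonneg.mpr hs.2) _)]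
  have hF_sum : Summable fun k => ∫ s in Set.Ioc 0 t, ‖F k s‖ := by
    simpa only [hF_norm] using hsum.mul_left (Gamma δ)
  have hΓ : Gamma δ ≠ 0 := (Gamma_pos_of_pos hδ).ne'
  calc rlInt δ (fun s => ∑' k, c k * ∑ i ∈ S k, powDivGamma (e i) s) t
      = 1 / Gamma δ * ∫ s in Set.Ioc 0 t, ∑' k, F k s := by
        simp_rw [rlInt, intervalIntegral.integral_of_le ht, F, ← tsum_mul_left]
    _ = 1 / Gamma δ * ∑' k, ∫ s in Set.Ioc 0 t, F k s := by
        rw [integral_tsum_of_summable_integral_norm hF_int hF_sum]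
    _ = ∑' k, c k * ∑ i ∈ S k, powDivGamma (e i + δ) t := by
        simp_rw [F, hF_integral, tsum_mul_left]
        field_simp

lemma rlInt_const_mul (δ c : ℝ) (f : ℝ → ℝ) (t : ℝ) :
    rlInt δ (fun s => c * f s) t = c * rlInt δ f t := by
  simp only [rlInt, mul_left_comm _ c, intervalIntegral.integral_const_mul]

theorem sdtfppI_eq_rlInt_sdtfppII_general (lam : ℝ) (n : ℕ)
    (α : ℕ → ℝ) (hα : ∀ j ≤ n, 0 < α j ∧ α j ≤ 1) (hgap : 0 < α n - α 0)
    (t : ℝ) (ht : 0 ≤ t) :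
    pI lam α n t = rlInt (α n - α 0) (fun u => qII lam α n u) t := by
  have hn : n ≠ 0 := by rintro rfl; simp at hgap
  have hα_pos : ∀ j : Fin (n + 1), 0 < α j := fun j => (hα j (Nat.lt_succ_iff.mp j.isLt)).1
  obtain ⟨a, ha, haα⟩ : ∃ a, 0 < a ∧ ∀ j : Fin (n + 1), a ≤ α j :=
    ⟨univ.inf' univ_nonempty fun j : Fin (n + 1) => α j, (lt_inf'_iff _).mpr fun j _ => hα_pos j,
      fun j => inf'_le _ (mem_univ j)⟩
  have hE : ∀ κ : Fin (n + 1) → ℕ, 0 ≤ ∑ j, (κ j : ℝ) * α j :=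
    fun κ => sum_nonneg fun j _ => mul_nonneg (κ j).cast_nonneg (hα_pos j).le
  have hsum : Summable fun k => |(-lam) ^ k| * ∑ κ ∈ Omega n k,
      powDivGamma (∑ j, (κ j : ℝ) * α j + (α n - α 0)) t := by
    simpa only [abs_pow, abs_neg] using summable_pow_mul_sum_powDivGamma ha haα |lam| ht hgap.le
      fun k κ hκ => (mem_Omega.mp hκ).1
  calc pI lam α n t
      = (-1) ^ n * ∑' k, (-lam) ^ k * ∑ κ ∈ Omega n k,
          powDivGamma (∑ j, (κ j : ℝ) * α j + (α n - α 0)) t := by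
        simp only [pI, sum_Theta_eq_sum_Omega hn _ α fun x => t ^ x / Gamma (1 + x)]
        rfl
    _ = (-1) ^ n * rlInt (α n - α 0) (fun s => ∑' k, (-lam) ^ k *
          ∑ κ ∈ Omega n k, powDivGamma (∑ j, (κ j : ℝ) * α j) s) t := by
        rw [rlInt_tsum_mul_sum_powDivGamma hgap ht _ _ hE hsum]
    _ = rlInt (α n - α 0) (fun u => qII lam α n u) t := (rlInt_const_mul _ _ _ _).symm

/-- Relationship between the state probabilities of SDTFPP-I and SDTFPP-II when
`α_n > α_0`: `p^{α_n}(n, t) = I^{α_n − α_0}_t Pr{N_2(t, λ) = n}`. -/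
theorem sdtfppI_eq_rlInt_sdtfppII (lam : ℝ) (hlam : 0 < lam) (n : ℕ)
    (α : ℕ → ℝ) (hα : ∀ j ≤ n, 0 < α j ∧ α j ≤ 1) (hgap : 0 < α n - α 0)
    (t : ℝ) (ht : 0 ≤ t) :
    pI lam α n t = rlInt (α n - α 0) (fun u => qII lam α n u) t :=
  sdtfppI_eq_rlInt_sdtfppII_general lam n α hα hgap t ht
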